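/- arXiv:2305.17697 — 2 statements merged into one kernel-verified Lean document; each statement's English description precedes it below -/
import Mathlib

section
/- The map V ↦ span(e_n) ⊕ V and the map V ↦ V ∩ span(e_n, f_n)^⊥ are mutually inverse order-preserving bijections between the set of isotropic subspaces of ℚ^{2n} strictly containing Q and contained in W, and the set of isotropic subspaces of span(e_n, f_n)^⊥ strictly containing Q ∩ span(e_n, f_n)^⊥, whenever Q is an isotropic subspace contained in W with span(e_n) ⊆ Q and Q ≠ span(e_n). -/
open Sum

/-- The standard symplectic form on `R^{2n}` with coordinates indexed by `Fin n ⊕ Fin n`: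
`e i` corresponds to `inl i` and `f i` to `inr i`. -/
noncomputable def omegaForm (R : Type*) [CommRing R] (n : ℕ) :
    ((Fin n ⊕ Fin n) → R) →ₗ[R] ((Fin n ⊕ Fin n) → R) →ₗ[R] R :=
  LinearMap.mk₂ R
    (fun x y => ∑ i : Fin n,
      (x (Sum.inl i) * y (Sum.inr i) - x (Sum.inr i) * y (Sum.inl i)))
    (fun x x' y => by
      rw [← Finset.sum_add_distrib]
      exact Finset.sum_congr rfl fun i _ => by simp only [Pi.add_apply]; ring)
    (fun c x y => by
      rw [Finset.smul_sum]
      exact Finset.sum_congr rfl fun i _ => by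
        simp only [Pi.smul_apply, smul_eq_mul]; ring)
    (fun x y y' => by
      rw [← Finset.sum_add_distrib]
      exact Finset.sum_congr rfl fun i _ => by simp only [Pi.add_apply]; ring)
    (fun c x y => by
      rw [Finset.smul_sum]
      exact Finset.sum_congr rfl fun i _ => by
        simp only [Pi.smul_apply, smul_eq_mul]; ring)

/-- The standard basis vector `e i`. -/
noncomputable def eVec (R : Type*) [CommRing R] (n : ℕ) (i : Fin n) :
    (Fin n ⊕ Fin n) → R := Pi.single (Sum.inl i) 1

/-- The standard basis vector `f i`. -/
noncomputable def fVec (R : Type*) [CommRing R] (n : ℕ) (i : Fin n) :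
    (Fin n ⊕ Fin n) → R := Pi.single (Sum.inr i) 1

/-- A subspace is isotropic if the symplectic form vanishes identically on it. -/
def IsIsotropic {n : ℕ} (V : Submodule ℚ ((Fin n ⊕ Fin n) → ℚ)) : Prop :=
  ∀ x ∈ V, ∀ y ∈ V, omegaForm ℚ n x y = 0

/-- The symplectic complement of a submodule. -/
noncomputable def sPerp {R : Type*} [CommRing R] {n : ℕ}
    (H : Submodule R ((Fin n ⊕ Fin n) → R)) : Submodule R ((Fin n ⊕ Fin n) → R) where
  carrier := {v | ∀ h ∈ H, omegaForm R n v h = 0}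
  add_mem' := by
    intro a b ha hb h hh
    simp [map_add, LinearMap.add_apply, ha h hh, hb h hh]
  zero_mem' := by intro h hh; simp
  smul_mem' := by
    intro c a ha h hh
    simp [map_smul, LinearMap.smul_apply, ha h hh]

/-- `W = span(e_1, f_1, …, e_{n}, f_{n}, e_{n+1})` inside `ℚ^{2(n+1)}`. -/
noncomputable def Wspace (n : ℕ) : Submodule ℚ ((Fin (n+1) ⊕ Fin (n+1)) → ℚ) :=
  Submodule.span ℚ
    (Set.range (eVec ℚ (n+1)) ∪ (fVec ℚ (n+1) '' {i | i ≠ Fin.last n}))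

section
variable {n : ℕ}

lemma omega_apply (x y : (Fin n ⊕ Fin n) → ℚ) :
    omegaForm ℚ n x y = ∑ i, (x (inl i) * y (inr i) - x (inr i) * y (inl i)) := rfl

lemma omega_e_left (v : (Fin (n+1) ⊕ Fin (n+1)) → ℚ) :
    omegaForm ℚ (n+1) (eVec ℚ (n+1) (Fin.last n)) v = v (inr (Fin.last n)) := by
  rw [omega_apply]
  simp [eVec, Pi.single_apply]

lemma omega_e_right (v : (Fin (n+1) ⊕ Fin (n+1)) → ℚ) :
    omegaForm ℚ (n+1) v (eVec ℚ (n+1) (Fin.last n)) = -v (inr (Fin.last n)) := by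
  rw [omega_apply]
  simp [eVec, Pi.single_apply]

lemma omega_f_right (v : (Fin (n+1) ⊕ Fin (n+1)) → ℚ) :
    omegaForm ℚ (n+1) v (fVec ℚ (n+1) (Fin.last n)) = v (inl (Fin.last n)) := by
  rw [omega_apply]
  simp [fVec, Pi.single_apply]

lemma mem_sPerp_iff (H : Submodule ℚ ((Fin n ⊕ Fin n) → ℚ)) (v) :
    v ∈ sPerp H ↔ ∀ h ∈ H, omegaForm ℚ n v h = 0 := Iff.rfl

lemma mem_P_iff (v : (Fin (n+1) ⊕ Fin (n+1)) → ℚ) :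
    v ∈ sPerp (Submodule.span ℚ
      {eVec ℚ (n+1) (Fin.last n), fVec ℚ (n+1) (Fin.last n)}) ↔
      v (inl (Fin.last n)) = 0 ∧ v (inr (Fin.last n)) = 0 := by
  constructor
  · intro hv
    have h1 := hv (eVec ℚ (n+1) (Fin.last n)) (Submodule.subset_span (Set.mem_insert _ _))
    have h2 := hv (fVec ℚ (n+1) (Fin.last n))
      (Submodule.subset_span (Set.mem_insert_of_mem _ rfl))
    rw [omega_e_right] at h1
    rw [omega_f_right] at h2
    exact ⟨h2, by linarith⟩
  · intro ⟨h1, h2⟩ h hh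
    have : Submodule.span ℚ {eVec ℚ (n+1) (Fin.last n), fVec ℚ (n+1) (Fin.last n)} ≤
        LinearMap.ker (omegaForm ℚ (n+1) v) := by
      rw [Submodule.span_le]
      rintro x (rfl | rfl) <;> simp [LinearMap.mem_ker, omega_e_right, omega_f_right, h1, h2]
    exact this hh

lemma mem_W_iff (v : (Fin (n+1) ⊕ Fin (n+1)) → ℚ) :
    v ∈ Wspace n ↔ v (inr (Fin.last n)) = 0 := by
  constructor
  · intro hv
    have : Wspace n ≤ LinearMap.ker
        ((LinearMap.proj (inr (Fin.last n)) : ((Fin (n+1) ⊕ Fin (n+1)) → ℚ) →ₗ[ℚ] ℚ)) := by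
      rw [Wspace, Submodule.span_le]
      rintro x (⟨i, rfl⟩ | ⟨i, hi, rfl⟩)
      · simp [eVec, LinearMap.mem_ker, Pi.single_apply]
      · simp [fVec, LinearMap.mem_ker, Pi.single_apply, Ne.symm hi]
    exact this hv
  · intro hv
    have hsum : v = ∑ j : Fin (n+1) ⊕ Fin (n+1), Pi.single j (v j) :=
      (Finset.univ_sum_single v).symm
    rw [hsum]
    apply Submodule.sum_mem
    intro j _
    rcases j with i | i
    · have : Pi.single (inl i : Fin (n+1) ⊕ Fin (n+1)) (v (inl i)) = v (inl i) • eVec ℚ (n+1) i := by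
        rw [eVec, ← Pi.single_smul, smul_eq_mul, mul_one]
      rw [this]
      exact Submodule.smul_mem _ _ (Submodule.subset_span (Or.inl ⟨i, rfl⟩))
    · by_cases hi : i = Fin.last n
      · subst hi; rw [hv]; simp
      · have : Pi.single (inr i : Fin (n+1) ⊕ Fin (n+1)) (v (inr i)) = v (inr i) • fVec ℚ (n+1) i := by
          rw [fVec, ← Pi.single_smul, smul_eq_mul, mul_one]
        rw [this]
        exact Submodule.smul_mem _ _ (Submodule.subset_span (Or.inr ⟨i, hi, rfl⟩))

end
section
variable {n : ℕ}

local notation "ee" => eVec ℚ (n+1) (Fin.last n)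
local notation "PP" => sPerp (Submodule.span ℚ
  {eVec ℚ (n+1) (Fin.last n), fVec ℚ (n+1) (Fin.last n)})

lemma P_le_W : PP ≤ Wspace n := fun v hv => by
  rw [mem_W_iff]
  exact ((mem_P_iff v).mp hv).2

lemma e_lastl : (ee) (inl (Fin.last n)) = 1 := by simp [eVec]
lemma e_lastr : (ee) (inr (Fin.last n)) = 0 := by simp [eVec]

lemma sup_inf_eq (V : Submodule ℚ ((Fin (n+1) ⊕ Fin (n+1)) → ℚ))
    (heV : ee ∈ V) (hVW : V ≤ Wspace n) :
    Submodule.span ℚ {ee} ⊔ (V ⊓ PP) = V := by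
  apply le_antisymm
  · exact sup_le ((Submodule.span_singleton_le_iff_mem _ _).mpr heV) inf_le_left
  · intro v hv
    have hw : v (inr (Fin.last n)) = 0 := (mem_W_iff v).mp (hVW hv)
    have hdec : v = v (inl (Fin.last n)) • ee + (v - v (inl (Fin.last n)) • ee) := by ring_nf
    rw [hdec]
    apply Submodule.add_mem
    · exact Submodule.mem_sup_left (Submodule.smul_mem _ _ (Submodule.mem_span_singleton_self _))
    · apply Submodule.mem_sup_right
      refine Submodule.mem_inf.mpr ⟨Submodule.sub_mem _ hv (Submodule.smul_mem _ _ heV), ?_⟩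
      rw [mem_P_iff]
      constructor
      · simp [e_lastl]
      · simp [e_lastr, hw]

lemma inf_sup_eq (U : Submodule ℚ ((Fin (n+1) ⊕ Fin (n+1)) → ℚ)) (hU : U ≤ PP) :
    (Submodule.span ℚ {ee} ⊔ U) ⊓ PP = U := by
  apply le_antisymm
  · intro x hx
    obtain ⟨hx1, hx2⟩ := Submodule.mem_inf.mp hx
    obtain ⟨y, hy, u, hu, rfl⟩ := Submodule.mem_sup.mp hx1
    obtain ⟨a, rfl⟩ := Submodule.mem_span_singleton.mp hy
    have hxl : (a • ee + u) (inl (Fin.last n)) = 0 := ((mem_P_iff _).mp hx2).1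
    have hul : u (inl (Fin.last n)) = 0 := ((mem_P_iff _).mp (hU hu)).1
    have ha : a = 0 := by
      simp [e_lastl, hul] at hxl
      exact hxl
    rw [ha, zero_smul, zero_add]
    exact hu
  · exact le_inf le_sup_right hU

lemma iso_sup (U : Submodule ℚ ((Fin (n+1) ⊕ Fin (n+1)) → ℚ))
    (hU : IsIsotropic U) (hUP : U ≤ PP) :
    IsIsotropic (Submodule.span ℚ {ee} ⊔ U) := by
  intro x hx y hy
  obtain ⟨y1, hy1, u, hu, rfl⟩ := Submodule.mem_sup.mp hx
  obtain ⟨y2, hy2, u', hu', rfl⟩ := Submodule.mem_sup.mp hy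
  obtain ⟨a, rfl⟩ := Submodule.mem_span_singleton.mp hy1
  obtain ⟨b, rfl⟩ := Submodule.mem_span_singleton.mp hy2
  have hur : u (inr (Fin.last n)) = 0 := ((mem_P_iff _).mp (hUP hu)).2
  have hur' : u' (inr (Fin.last n)) = 0 := ((mem_P_iff _).mp (hUP hu')).2
  have h1 : omegaForm ℚ (n+1) (ee) (ee) = 0 := by rw [omega_e_left, e_lastr]
  have h2 : omegaForm ℚ (n+1) (ee) u' = 0 := by rw [omega_e_left, hur']
  have h3 : omegaForm ℚ (n+1) u (ee) = 0 := by rw [omega_e_right, hur]; simp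
  have h4 : omegaForm ℚ (n+1) u u' = 0 := hU u hu u' hu'
  simp [map_add, map_smul, LinearMap.add_apply, LinearMap.smul_apply, h1, h2, h3, h4]

end
/-- `V ↦ span(e_n) ⊔ V` and `V ↦ V ⊓ span(e_n, f_n)^⊥` are mutually
inverse order-preserving bijections between the isotropic subspaces strictly containing `Q`
and contained in `W`, and the isotropic subspaces of `span(e_n, f_n)^⊥` strictly
containing `Q ⊓ span(e_n, f_n)^⊥`. -/
theorem stmt3 (n : ℕ) (Q : Submodule ℚ ((Fin (n+1) ⊕ Fin (n+1)) → ℚ))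
    (hQ : IsIsotropic Q) (hQW : Q ≤ Wspace n)
    (heQ : Submodule.span ℚ {eVec ℚ (n+1) (Fin.last n)} ≤ Q)
    (hQne : Q ≠ Submodule.span ℚ {eVec ℚ (n+1) (Fin.last n)})
    (E : Submodule ℚ ((Fin (n+1) ⊕ Fin (n+1)) → ℚ))
    (hE : E = Submodule.span ℚ {eVec ℚ (n+1) (Fin.last n)})
    (P : Submodule ℚ ((Fin (n+1) ⊕ Fin (n+1)) → ℚ))
    (hP : P = sPerp (Submodule.span ℚ
      {eVec ℚ (n+1) (Fin.last n), fVec ℚ (n+1) (Fin.last n)}))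
    (A B : Set (Submodule ℚ ((Fin (n+1) ⊕ Fin (n+1)) → ℚ)))
    (hA : A = {V | IsIsotropic V ∧ Q < V ∧ V ≤ Wspace n})
    (hB : B = {U | IsIsotropic U ∧ U ≤ P ∧ Q ⊓ P < U}) :
    (∀ V ∈ A, V ⊓ P ∈ B) ∧
    (∀ U ∈ B, E ⊔ U ∈ A) ∧
    (∀ V ∈ A, E ⊔ (V ⊓ P) = V) ∧
    (∀ U ∈ B, (E ⊔ U) ⊓ P = U) ∧
    (∀ V ∈ A, ∀ V' ∈ A, V ≤ V' → V ⊓ P ≤ V' ⊓ P) ∧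
    (∀ U ∈ B, ∀ U' ∈ B, U ≤ U' → E ⊔ U ≤ E ⊔ U') := by

  subst hE hP hA hB
  set e := eVec ℚ (n+1) (Fin.last n) with he
  have heQ' : e ∈ Q := heQ (Submodule.mem_span_singleton_self _)
  -- key facts
  have hQdec : Submodule.span ℚ {e} ⊔ (Q ⊓ sPerp (Submodule.span ℚ
      {eVec ℚ (n+1) (Fin.last n), fVec ℚ (n+1) (Fin.last n)})) = Q :=
    sup_inf_eq Q heQ' hQW
  refine ⟨?_, ?_, ?_, ?_, ?_, ?_⟩
  · rintro V ⟨hViso, hQV, hVW⟩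
    refine ⟨fun x hx y hy => hViso x hx.1 y hy.1, inf_le_right, ?_⟩
    refine lt_of_le_of_ne (inf_le_inf_right _ hQV.le) ?_
    intro heq
    apply hQV.ne
    rw [← hQdec, heq]
    exact sup_inf_eq V (hQV.le heQ') hVW
  · rintro U ⟨hUiso, hUP, hQPU⟩
    refine ⟨iso_sup U hUiso hUP, ?_, ?_⟩
    · refine lt_of_le_of_ne ?_ ?_
      · rw [← hQdec]
        exact sup_le_sup_left hQPU.le _
      · intro heq
        apply hQPU.ne
        rw [heq]
        exact inf_sup_eq U hUP
    · exact sup_le (heQ.trans hQW) (hUP.trans P_le_W)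
  · rintro V ⟨hViso, hQV, hVW⟩
    exact sup_inf_eq V (hQV.le heQ') hVW
  · rintro U ⟨hUiso, hUP, hQPU⟩
    exact inf_sup_eq U hUP
  · rintro V _ V' _ h
    exact inf_le_inf_right _ h
  · rintro U _ U' _ h
    exact sup_le_sup_left h _
end

section
/- The simplicial complex β_n (standard and σ subsets of {1, 1̄, ..., n, n̄}) is contractible; equivalently its reduced simplicial homology vanishes in all degrees. -/
/-- A finite set of vertices `(a, b) : Fin n × Bool` (where `(a, false)` is `a` and
`(a, true)` is `ā`) is *standard* if it is nonempty and contains no pair `{a, ā}`.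
These are the simplices of the complex `∂β_n`. -/
def StdSubset (n : ℕ) (I : Finset (Fin n × Bool)) : Prop :=
  I.Nonempty ∧ ∀ a : Fin n, ¬ ((a, false) ∈ I ∧ (a, true) ∈ I)

/-- A finite set of vertices is a *σ subset* (for the complex `β_{n+1}`) if it is nonempty,
contains both `n+1` and its bar, and contains no other pair `{a, ā}`. -/
def SigmaSubset (n : ℕ) (I : Finset (Fin (n+1) × Bool)) : Prop :=
  I.Nonempty ∧ (Fin.last n, false) ∈ I ∧ (Fin.last n, true) ∈ I ∧
    ∀ a : Fin (n+1), a ≠ Fin.last n → ¬ ((a, false) ∈ I ∧ (a, true) ∈ I)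

/-- The geometric vertex map sending `a ↦ e_a` and `ā ↦ -e_a` in `ℝ^n`. -/
noncomputable def vertexMap (n : ℕ) : Fin n × Bool → EuclideanSpace ℝ (Fin n) :=
  fun p => if p.2 then -(EuclideanSpace.single p.1 (1 : ℝ)) else EuclideanSpace.single p.1 1

/-- The geometric realization of `∂β_n`: the union of the convex hulls of the vertex sets
of its simplices. -/
noncomputable def realStd (n : ℕ) : Set (EuclideanSpace ℝ (Fin n)) :=
  ⋃ I ∈ {I : Finset (Fin n × Bool) | StdSubset n I},
    convexHull ℝ (vertexMap n '' (I : Set (Fin n × Bool)))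

/-- The geometric realization of `β_{n+1}`: the union of the convex hulls of the vertex
sets of its (standard and σ) simplices. -/
noncomputable def realBeta (n : ℕ) : Set (EuclideanSpace ℝ (Fin (n+1))) :=
  ⋃ I ∈ {I : Finset (Fin (n+1) × Bool) | StdSubset (n+1) I ∨ SigmaSubset n I},
    convexHull ℝ (vertexMap (n+1) '' (I : Set (Fin (n+1) × Bool)))

/-!
Every simplex `I` of `β_{n+1}` lies in the σ simplex `I ∪ {n+1, n+1̄}`, whose convex hull contains
the midpoint `0` of `e_{n+1}` and `-e_{n+1}`. So the realization is a union of convex sets all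
containing `0`, hence star-convex about `0`, hence contractible.
-/

theorem starConvex_of_forall_exists_convex {𝕜 E : Type*} [Semiring 𝕜] [PartialOrder 𝕜]
    [AddCommMonoid E] [Module 𝕜 E] {s : Set E} {x : E}
    (h : ∀ y ∈ s, ∃ t ⊆ s, Convex 𝕜 t ∧ x ∈ t ∧ y ∈ t) : StarConvex 𝕜 x s := by
  intro y hy a b ha hb hab
  obtain ⟨t, hts, ht, hxt, hyt⟩ := h y hy
  exact hts (ht.starConvex hxt hyt ha hb hab)

def poleEdge (n : ℕ) : Finset (Fin (n+1) × Bool) :=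
  {(Fin.last n, false), (Fin.last n, true)}

theorem sigmaSubset_poleEdge (n : ℕ) : SigmaSubset n (poleEdge n) :=
  ⟨⟨(Fin.last n, false), by simp [poleEdge]⟩, by simp [poleEdge], by simp [poleEdge],
    fun a ha => by simp [poleEdge, ha]⟩

theorem sigmaSubset_union_poleEdge {n : ℕ} {I : Finset (Fin (n+1) × Bool)}
    (hI : StdSubset (n+1) I ∨ SigmaSubset n I) : SigmaSubset n (I ∪ poleEdge n) := by
  refine ⟨⟨(Fin.last n, false), by simp [poleEdge]⟩, by simp [poleEdge], by simp [poleEdge], ?_⟩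
  rintro a ha ⟨hfalse, htrue⟩
  have mem_I : ∀ b : Bool, (a, b) ∈ I ∪ poleEdge n → (a, b) ∈ I := by
    intro b hb
    simpa [poleEdge, ha] using hb
  rcases hI with hstd | hsig
  · exact hstd.2 a ⟨mem_I _ hfalse, mem_I _ htrue⟩
  · exact hsig.2.2.2 a ha ⟨mem_I _ hfalse, mem_I _ htrue⟩

theorem zero_mem_convexHull_poleEdge (n : ℕ) :
    (0 : EuclideanSpace ℝ (Fin (n+1))) ∈
      convexHull ℝ (vertexMap (n+1) '' (poleEdge n : Set (Fin (n+1) × Bool))) := by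
  have hpair : vertexMap (n+1) '' (poleEdge n : Set (Fin (n+1) × Bool)) =
      {EuclideanSpace.single (Fin.last n) 1, -EuclideanSpace.single (Fin.last n) 1} := by
    simp [poleEdge, Set.image_pair, vertexMap]
  rw [hpair, convexHull_pair, ← midpoint_self_neg ℝ (EuclideanSpace.single (Fin.last n) (1 : ℝ))]
  exact midpoint_mem_segment _ _

theorem convexHull_subset_realBeta {n : ℕ} {I : Finset (Fin (n+1) × Bool)}
    (hI : StdSubset (n+1) I ∨ SigmaSubset n I) :
    convexHull ℝ (vertexMap (n+1) '' (I : Set (Fin (n+1) × Bool))) ⊆ realBeta n :=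
  fun _ hy => Set.mem_biUnion hI hy

theorem starConvex_zero_realBeta (n : ℕ) : StarConvex ℝ 0 (realBeta n) := by
  refine starConvex_of_forall_exists_convex fun y hy => ?_
  obtain ⟨I, hI, hyI⟩ := Set.mem_iUnion₂.1 hy
  have hull_mono : ∀ J ⊆ I ∪ poleEdge n, convexHull ℝ (vertexMap (n+1) '' (J : Set _)) ⊆
      convexHull ℝ (vertexMap (n+1) '' ((I ∪ poleEdge n : Finset _) : Set _)) :=
    fun J hJ => convexHull_mono (Set.image_mono (Finset.coe_subset.2 hJ))
  exact ⟨_, convexHull_subset_realBeta (Or.inr (sigmaSubset_union_poleEdge hI)),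
    convex_convexHull ℝ _, hull_mono _ Finset.subset_union_right (zero_mem_convexHull_poleEdge n),
    hull_mono _ Finset.subset_union_left hyI⟩

/-- The simplicial complex `β_{n+1}` is contractible. -/
theorem stmt12 (n : ℕ) : ContractibleSpace (realBeta n) :=
  (starConvex_zero_realBeta n).contractibleSpace
    ⟨0, convexHull_subset_realBeta (Or.inr (sigmaSubset_poleEdge n)) (zero_mem_convexHull_poleEdge n)⟩
end
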